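/- Let 𝐢 = (i_1, i_2) ∈ {1, …, J}² and define Ψ_𝐢(x_1, x_2) = (3/(2h²)) ψ_{i_1}(x_1) ψ_{i_2}(x_2) and Φ_𝐢(x_1, x_2) = (3/(2h²)) [ φ_{i_1}(x_1) ψ_{i_2}(x_2) + ψ_{i_1}(x_1) φ_{i_2}(x_2) ]. Then Ψ_𝐢 is continuously differentiable on the closed square [−L, L]², vanishes on the boundary of (−L, L)², and is the weak solution of the Poisson problem −ΔΨ_𝐢 = Φ_𝐢 with homogeneous Dirichlet boundary conditions: for every smooth compactly supported function w on (−L, L)², ∫ ∇Ψ_𝐢 · ∇w dx = ∫ Φ_𝐢 w dx. -/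

import Mathlib

open MeasureTheory
set_option linter.unusedSectionVars false
set_option maxHeartbeats 1000000

noncomputable section

open Set

/-- Mesh size `h = 2L/J`. -/
def meshH (L : ℝ) (J : ℕ) : ℝ := 2 * L / J

/-- Grid node `x_i = −L + i·h`. -/
def nodeX (L : ℝ) (J : ℕ) (i : ℕ) : ℝ := -L + i * meshH L J

/-- The one-dimensional piecewise constant basis functions `φ_i`, `i = 1, …, J`:
`φ_1 = (3/2)·1_{[x_0,x_1]} − (1/2)·1_{(x_1,x_2]}`,
`φ_i = −(1/2)·1_{(x_{i−2},x_{i−1}]} + 1_{(x_{i−1},x_i]} − (1/2)·1_{(x_i,x_{i+1}]}`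
for `2 ≤ i ≤ J−1`, and
`φ_J = −(1/2)·1_{(x_{J−2},x_{J−1}]} + (3/2)·1_{(x_{J−1},x_J]}` (zero outside). -/
def phiF (L : ℝ) (J : ℕ) (i : ℕ) : ℝ → ℝ := fun x =>
  if i = 1 then
    (if x ∈ Icc (nodeX L J 0) (nodeX L J 1) then (3 : ℝ) / 2 else 0)
      + (if x ∈ Ioc (nodeX L J 1) (nodeX L J 2) then -(1 : ℝ) / 2 else 0)
  else if i = J then
    (if x ∈ Ioc (nodeX L J (J - 2)) (nodeX L J (J - 1)) then -(1 : ℝ) / 2 else 0)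
      + (if x ∈ Ioc (nodeX L J (J - 1)) (nodeX L J J) then (3 : ℝ) / 2 else 0)
  else
    (if x ∈ Ioc (nodeX L J (i - 2)) (nodeX L J (i - 1)) then -(1 : ℝ) / 2 else 0)
      + (if x ∈ Ioc (nodeX L J (i - 1)) (nodeX L J i) then (1 : ℝ) else 0)
      + (if x ∈ Ioc (nodeX L J i) (nodeX L J (i + 1)) then -(1 : ℝ) / 2 else 0)

/-- The one-dimensional piecewise quadratic functions `ψ_i = (−Δ)⁻¹ φ_i`,
extended by `0` outside their support. -/
def psiF (L : ℝ) (J : ℕ) (i : ℕ) : ℝ → ℝ := fun x =>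
  if i = 1 then
    (if x ∈ Icc (nodeX L J 0) (nodeX L J 1) then
        -(3 : ℝ) / 4 * (x - nodeX L J 0) ^ 2 + meshH L J * (x - nodeX L J 0) else 0)
      + (if x ∈ Ioc (nodeX L J 1) (nodeX L J 2) then
        (1 : ℝ) / 4 * (x - nodeX L J 1) ^ 2 - meshH L J / 2 * (x - nodeX L J 1)
          + (meshH L J) ^ 2 / 4 else 0)
  else if i = J then
    (if x ∈ Ioc (nodeX L J (J - 2)) (nodeX L J (J - 1)) then
        (1 : ℝ) / 4 * (nodeX L J (J - 1) - x) ^ 2 - meshH L J / 2 * (nodeX L J (J - 1) - x)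
          + (meshH L J) ^ 2 / 4 else 0)
      + (if x ∈ Ioc (nodeX L J (J - 1)) (nodeX L J J) then
        -(3 : ℝ) / 4 * (nodeX L J J - x) ^ 2 + meshH L J * (nodeX L J J - x) else 0)
  else
    (if x ∈ Ioc (nodeX L J (i - 2)) (nodeX L J (i - 1)) then
        (1 : ℝ) / 4 * (x - nodeX L J (i - 2)) ^ 2 else 0)
      + (if x ∈ Ioc (nodeX L J (i - 1)) (nodeX L J i) then
        -(1 : ℝ) / 2 * (x - nodeX L J (i - 1) - meshH L J / 2) ^ 2
          + 3 * (meshH L J) ^ 2 / 8 else 0)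
      + (if x ∈ Ioc (nodeX L J i) (nodeX L J (i + 1)) then
        (1 : ℝ) / 4 * (nodeX L J (i + 1) - x) ^ 2 else 0)



lemma quad_hasDerivAt (A B C x : ℝ) :
    HasDerivAt (fun y : ℝ => A*y^2 + B*y + C) (2*A*x + B) x := by
  have h1 : HasDerivAt (fun y : ℝ => y^2) (2*x) x := by
    simpa using (hasDerivAt_pow 2 x)
  have := ((h1.const_mul A).add ((hasDerivAt_id x).const_mul B)).add_const C
  exact this.congr_deriv (by ring)

lemma hasDerivAt_of_quad {f : ℝ → ℝ} (A B C : ℝ)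
    (hf : ∀ y, f y = A*y^2 + B*y + C) {x d : ℝ} (hd : 2*A*x + B = d) :
    HasDerivAt f d x := by
  have hfe : f = fun y : ℝ => A*y^2 + B*y + C := funext hf
  rw [hfe, ← hd]; exact quad_hasDerivAt A B C x

/-- FTC-2 with finitely many exceptional points. -/
lemma ftc_finset (s : Finset ℝ) : ∀ {a b : ℝ} {F D : ℝ → ℝ}, a ≤ b →
    ContinuousOn F (Icc a b) →
    (∀ x ∈ Ioo a b, x ∉ s → HasDerivAt F (D x) x) →
    IntervalIntegrable D volume a b →
    ∫ y in a..b, D y = F b - F a := by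
  classical
  induction s using Finset.induction_on with
  | empty =>
    intro a b F D hab hc hd hi
    exact intervalIntegral.integral_eq_sub_of_hasDerivAt_of_le hab hc
      (fun x hx => hd x hx (by simp)) hi
  | @insert p s hp ih =>
    intro a b F D hab hc hd hi
    by_cases hpab : p ∈ Ioo a b
    · have hi1 : IntervalIntegrable D volume a p :=
        hi.mono_set (by rw [uIcc_of_le hpab.1.le, uIcc_of_le hab]; exact Icc_subset_Icc le_rfl hpab.2.le)
      have hi2 : IntervalIntegrable D volume p b :=
        hi.mono_set (by rw [uIcc_of_le hpab.2.le, uIcc_of_le hab]; exact Icc_subset_Icc hpab.1.le le_rfl)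
      have e1 : ∫ y in a..p, D y = F p - F a := by
        refine ih hpab.1.le (hc.mono (Icc_subset_Icc le_rfl hpab.2.le)) (fun x hx hxs => ?_) hi1
        refine hd x ⟨hx.1, hx.2.trans hpab.2⟩ ?_
        simp only [Finset.mem_insert, not_or]
        exact ⟨ne_of_lt hx.2, hxs⟩
      have e2 : ∫ y in p..b, D y = F b - F p := by
        refine ih hpab.2.le (hc.mono (Icc_subset_Icc hpab.1.le le_rfl)) (fun x hx hxs => ?_) hi2
        refine hd x ⟨hpab.1.trans hx.1, hx.2⟩ ?_
        simp only [Finset.mem_insert, not_or]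
        exact ⟨ne_of_gt hx.1, hxs⟩
      rw [← intervalIntegral.integral_add_adjacent_intervals hi1 hi2, e1, e2]
      ring
    · refine ih hab hc (fun x hx hxs => hd x hx ?_) hi
      simp only [Finset.mem_insert, not_or]
      exact ⟨fun h => hpab (h ▸ hx), hxs⟩
noncomputable section

def pwI (n0 n1 n2 n3 : ℝ) (P1 P2 P3 : ℝ → ℝ) : ℝ → ℝ := fun x =>
  (if x ∈ Icc n0 n1 then P1 x else 0)
    + (if x ∈ Ioc n1 n2 then P2 x else 0)
    + (if x ∈ Ioc n2 n3 then P3 x else 0)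

variable {n0 n1 n2 n3 : ℝ} {P1 P2 P3 D1 D2 D3 : ℝ → ℝ}

section eval
variable (h01 : n0 < n1) (h12 : n1 < n2) (h23 : n2 < n3)
include h01 h12 h23

lemma pwI_eq_left {x : ℝ} (hx : x < n0) : pwI n0 n1 n2 n3 P1 P2 P3 x = 0 := by
  simp only [pwI, mem_Icc, mem_Ioc]
  rw [if_neg (by intro h; linarith [h.1]), if_neg (by intro h; linarith [h.1]),
    if_neg (by intro h; linarith [h.1])]
  ring

lemma pwI_eq_right {x : ℝ} (hx : n3 < x) : pwI n0 n1 n2 n3 P1 P2 P3 x = 0 := by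
  simp only [pwI, mem_Icc, mem_Ioc]
  rw [if_neg (by intro h; linarith [h.2]), if_neg (by intro h; linarith [h.2]),
    if_neg (by intro h; linarith [h.2])]
  ring

lemma pwI_eq_1 {x : ℝ} (hx : x ∈ Icc n0 n1) : pwI n0 n1 n2 n3 P1 P2 P3 x = P1 x := by
  simp only [pwI, mem_Icc, mem_Ioc]
  rw [if_pos ⟨hx.1, hx.2⟩, if_neg (by intro h; linarith [h.1, hx.2]),
    if_neg (by intro h; linarith [h.1, hx.2])]
  ring

lemma pwI_eq_2 {x : ℝ} (hx : x ∈ Ioc n1 n2) : pwI n0 n1 n2 n3 P1 P2 P3 x = P2 x := by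
  simp only [pwI, mem_Icc, mem_Ioc]
  rw [if_neg (by intro h; linarith [h.2, hx.1]), if_pos ⟨hx.1, hx.2⟩,
    if_neg (by intro h; linarith [h.1, hx.2])]
  ring

lemma pwI_eq_3 {x : ℝ} (hx : x ∈ Ioc n2 n3) : pwI n0 n1 n2 n3 P1 P2 P3 x = P3 x := by
  simp only [pwI, mem_Icc, mem_Ioc]
  rw [if_neg (by intro h; linarith [h.2, hx.1]), if_neg (by intro h; linarith [h.2, hx.1]),
    if_pos ⟨hx.1, hx.2⟩]
  ring

-- eventual equalities
lemma pwI_ev_left {x : ℝ} (hx : x < n0) :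
    pwI n0 n1 n2 n3 P1 P2 P3 =ᶠ[nhds x] (fun _ => (0:ℝ)) := by
  filter_upwards [Iio_mem_nhds hx] with y hy
  exact pwI_eq_left h01 h12 h23 hy

lemma pwI_ev_right {x : ℝ} (hx : n3 < x) :
    pwI n0 n1 n2 n3 P1 P2 P3 =ᶠ[nhds x] (fun _ => (0:ℝ)) := by
  filter_upwards [Ioi_mem_nhds hx] with y hy
  exact pwI_eq_right h01 h12 h23 hy

lemma pwI_ev_1 {x : ℝ} (hx : x ∈ Ioo n0 n1) :
    pwI n0 n1 n2 n3 P1 P2 P3 =ᶠ[nhds x] P1 := by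
  filter_upwards [Ioo_mem_nhds hx.1 hx.2] with y hy
  exact pwI_eq_1 h01 h12 h23 ⟨hy.1.le, hy.2.le⟩

lemma pwI_ev_2 {x : ℝ} (hx : x ∈ Ioo n1 n2) :
    pwI n0 n1 n2 n3 P1 P2 P3 =ᶠ[nhds x] P2 := by
  filter_upwards [Ioo_mem_nhds hx.1 hx.2] with y hy
  exact pwI_eq_2 h01 h12 h23 ⟨hy.1, hy.2.le⟩

lemma pwI_ev_3 {x : ℝ} (hx : x ∈ Ioo n2 n3) :
    pwI n0 n1 n2 n3 P1 P2 P3 =ᶠ[nhds x] P3 := by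
  filter_upwards [Ioo_mem_nhds hx.1 hx.2] with y hy
  exact pwI_eq_3 h01 h12 h23 ⟨hy.1, hy.2.le⟩

variable (hd1 : ∀ x, HasDerivAt P1 (D1 x) x) (hd2 : ∀ x, HasDerivAt P2 (D2 x) x)
    (hd3 : ∀ x, HasDerivAt P3 (D3 x) x)
include hd1 hd2 hd3

-- interior regions
lemma pwI_deriv_r1 {x : ℝ} (hx : x ∈ Ioo n0 n1) :
    HasDerivAt (pwI n0 n1 n2 n3 P1 P2 P3) (D1 x) x :=
  (hd1 x).congr_of_eventuallyEq (pwI_ev_1 h01 h12 h23 hx)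

lemma pwI_deriv_r2 {x : ℝ} (hx : x ∈ Ioo n1 n2) :
    HasDerivAt (pwI n0 n1 n2 n3 P1 P2 P3) (D2 x) x :=
  (hd2 x).congr_of_eventuallyEq (pwI_ev_2 h01 h12 h23 hx)

lemma pwI_deriv_r3 {x : ℝ} (hx : x ∈ Ioo n2 n3) :
    HasDerivAt (pwI n0 n1 n2 n3 P1 P2 P3) (D3 x) x :=
  (hd3 x).congr_of_eventuallyEq (pwI_ev_3 h01 h12 h23 hx)

lemma pwI_deriv_left {x : ℝ} (hx : x < n0) :
    HasDerivAt (pwI n0 n1 n2 n3 P1 P2 P3) 0 x :=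
  (hasDerivAt_const x (0:ℝ)).congr_of_eventuallyEq (pwI_ev_left h01 h12 h23 hx)

lemma pwI_deriv_right {x : ℝ} (hx : n3 < x) :
    HasDerivAt (pwI n0 n1 n2 n3 P1 P2 P3) 0 x :=
  (hasDerivAt_const x (0:ℝ)).congr_of_eventuallyEq (pwI_ev_right h01 h12 h23 hx)

-- junction at n1
lemma pwI_deriv_n1 (v12 : P1 n1 = P2 n1) (d12 : D1 n1 = D2 n1) :
    HasDerivAt (pwI n0 n1 n2 n3 P1 P2 P3) (D1 n1) n1 := by
  have hval : pwI n0 n1 n2 n3 P1 P2 P3 n1 = P1 n1 := pwI_eq_1 h01 h12 h23 ⟨h01.le, le_rfl⟩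
  have hl : HasDerivWithinAt (pwI n0 n1 n2 n3 P1 P2 P3) (D1 n1) (Iic n1) n1 := by
    refine (hd1 n1).hasDerivWithinAt.congr_of_eventuallyEq ?_ hval
    filter_upwards [mem_nhdsWithin_of_mem_nhds (Ioi_mem_nhds h01), self_mem_nhdsWithin]
      with y hy1 hy2
    exact pwI_eq_1 h01 h12 h23 ⟨le_of_lt hy1, hy2⟩
  have hr : HasDerivWithinAt (pwI n0 n1 n2 n3 P1 P2 P3) (D1 n1) (Ici n1) n1 := by
    rw [d12]
    refine (hd2 n1).hasDerivWithinAt.congr_of_eventuallyEq ?_ (hval.trans v12)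
    filter_upwards [mem_nhdsWithin_of_mem_nhds (Iio_mem_nhds h12), self_mem_nhdsWithin]
      with y hy1 hy2
    rcases eq_or_lt_of_le (mem_Ici.mp hy2) with h | h
    · rw [← h, hval, v12]
    · exact pwI_eq_2 h01 h12 h23 ⟨h, le_of_lt hy1⟩
  have := hl.union hr
  rw [Iic_union_Ici] at this
  exact hasDerivWithinAt_univ.mp this

-- junction at n2
lemma pwI_deriv_n2 (v23 : P2 n2 = P3 n2) (d23 : D2 n2 = D3 n2) :
    HasDerivAt (pwI n0 n1 n2 n3 P1 P2 P3) (D2 n2) n2 := by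
  have hval : pwI n0 n1 n2 n3 P1 P2 P3 n2 = P2 n2 := pwI_eq_2 h01 h12 h23 ⟨h12, le_rfl⟩
  have hl : HasDerivWithinAt (pwI n0 n1 n2 n3 P1 P2 P3) (D2 n2) (Iic n2) n2 := by
    refine (hd2 n2).hasDerivWithinAt.congr_of_eventuallyEq ?_ hval
    filter_upwards [mem_nhdsWithin_of_mem_nhds (Ioi_mem_nhds h12), self_mem_nhdsWithin]
      with y hy1 hy2
    exact pwI_eq_2 h01 h12 h23 ⟨hy1, hy2⟩
  have hr : HasDerivWithinAt (pwI n0 n1 n2 n3 P1 P2 P3) (D2 n2) (Ici n2) n2 := by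
    rw [d23]
    refine (hd3 n2).hasDerivWithinAt.congr_of_eventuallyEq ?_ (hval.trans v23)
    filter_upwards [mem_nhdsWithin_of_mem_nhds (Iio_mem_nhds h23), self_mem_nhdsWithin]
      with y hy1 hy2
    rcases eq_or_lt_of_le (mem_Ici.mp hy2) with h | h
    · rw [← h, hval, v23]
    · exact pwI_eq_3 h01 h12 h23 ⟨h, le_of_lt hy1⟩
  have := hl.union hr
  rw [Iic_union_Ici] at this
  exact hasDerivWithinAt_univ.mp this

-- endpoints
lemma pwI_derivWithin_n0 :
    HasDerivWithinAt (pwI n0 n1 n2 n3 P1 P2 P3) (D1 n0) (Ici n0) n0 := by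
  refine (hd1 n0).hasDerivWithinAt.congr_of_eventuallyEq ?_
    (pwI_eq_1 h01 h12 h23 ⟨le_rfl, h01.le⟩)
  filter_upwards [mem_nhdsWithin_of_mem_nhds (Iio_mem_nhds h01), self_mem_nhdsWithin]
    with y hy1 hy2
  exact pwI_eq_1 h01 h12 h23 ⟨hy2, le_of_lt hy1⟩

lemma pwI_deriv_n0 (h0 : P1 n0 = 0) (hd0 : D1 n0 = 0) :
    HasDerivAt (pwI n0 n1 n2 n3 P1 P2 P3) 0 n0 := by
  have hval : pwI n0 n1 n2 n3 P1 P2 P3 n0 = 0 := (pwI_eq_1 h01 h12 h23 ⟨le_rfl, h01.le⟩).trans h0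
  have hl : HasDerivWithinAt (pwI n0 n1 n2 n3 P1 P2 P3) 0 (Iic n0) n0 := by
    refine (hasDerivAt_const n0 (0:ℝ)).hasDerivWithinAt.congr_of_eventuallyEq ?_ hval
    filter_upwards [self_mem_nhdsWithin] with y hy2
    rcases eq_or_lt_of_le (mem_Iic.mp hy2) with h | h
    · rw [h, hval]
    · exact pwI_eq_left h01 h12 h23 h
  have hr : HasDerivWithinAt (pwI n0 n1 n2 n3 P1 P2 P3) 0 (Ici n0) n0 :=
    hd0 ▸ pwI_derivWithin_n0 h01 h12 h23 hd1 hd2 hd3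
  have := hl.union hr
  rw [Iic_union_Ici] at this
  exact hasDerivWithinAt_univ.mp this

lemma pwI_derivWithin_n3 :
    HasDerivWithinAt (pwI n0 n1 n2 n3 P1 P2 P3) (D3 n3) (Iic n3) n3 := by
  refine (hd3 n3).hasDerivWithinAt.congr_of_eventuallyEq ?_
    (pwI_eq_3 h01 h12 h23 ⟨h23, le_rfl⟩)
  filter_upwards [mem_nhdsWithin_of_mem_nhds (Ioi_mem_nhds h23), self_mem_nhdsWithin]
    with y hy1 hy2
  exact pwI_eq_3 h01 h12 h23 ⟨hy1, hy2⟩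

lemma pwI_deriv_n3 (h3 : P3 n3 = 0) (hd3' : D3 n3 = 0) :
    HasDerivAt (pwI n0 n1 n2 n3 P1 P2 P3) 0 n3 := by
  have hval : pwI n0 n1 n2 n3 P1 P2 P3 n3 = 0 := (pwI_eq_3 h01 h12 h23 ⟨h23, le_rfl⟩).trans h3
  have hl : HasDerivWithinAt (pwI n0 n1 n2 n3 P1 P2 P3) 0 (Iic n3) n3 :=
    hd3' ▸ pwI_derivWithin_n3 h01 h12 h23 hd1 hd2 hd3
  have hr : HasDerivWithinAt (pwI n0 n1 n2 n3 P1 P2 P3) 0 (Ici n3) n3 := by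
    refine (hasDerivAt_const n3 (0:ℝ)).hasDerivWithinAt.congr_of_eventuallyEq ?_ hval
    filter_upwards [self_mem_nhdsWithin] with y hy2
    rcases eq_or_lt_of_le (mem_Ici.mp hy2) with h | h
    · rw [← h, hval]
    · exact pwI_eq_right h01 h12 h23 h
  have := hl.union hr
  rw [Iic_union_Ici] at this
  exact hasDerivWithinAt_univ.mp this

end eval

section master
variable {L : ℝ}
variable (h01 : n0 < n1) (h12 : n1 < n2) (h23 : n2 < n3)
variable (hd1 : ∀ x, HasDerivAt P1 (D1 x) x) (hd2 : ∀ x, HasDerivAt P2 (D2 x) x)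
    (hd3 : ∀ x, HasDerivAt P3 (D3 x) x)
include h01 h12 h23 hd1 hd2 hd3

/-- Master derivative lemma: `pwI P` has derivative `pwI D` at every interior point. -/
lemma pwI_master_deriv (hn0 : -L ≤ n0) (hn3 : n3 ≤ L)
    (hv0 : n0 = -L ∨ (P1 n0 = 0 ∧ D1 n0 = 0))
    (hv3 : n3 = L ∨ (P3 n3 = 0 ∧ D3 n3 = 0))
    (v12 : P1 n1 = P2 n1) (d12 : D1 n1 = D2 n1)
    (v23 : P2 n2 = P3 n2) (d23 : D2 n2 = D3 n2) :
    ∀ x ∈ Ioo (-L) L, HasDerivAt (pwI n0 n1 n2 n3 P1 P2 P3)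
      (pwI n0 n1 n2 n3 D1 D2 D3 x) x := by
  intro x hx
  rcases lt_trichotomy x n0 with h | h | h
  · rw [pwI_eq_left h01 h12 h23 h]
    exact pwI_deriv_left h01 h12 h23 hd1 hd2 hd3 h
  · subst h
    rcases hv0 with h0 | ⟨h0, hd0⟩
    · exact absurd hx.1 (by rw [h0]; exact lt_irrefl _)
    · rw [pwI_eq_1 h01 h12 h23 ⟨le_rfl, h01.le⟩, hd0]
      exact pwI_deriv_n0 h01 h12 h23 hd1 hd2 hd3 h0 hd0
  rcases lt_trichotomy x n1 with h1 | h1 | h1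
  · rw [pwI_eq_1 h01 h12 h23 ⟨h.le, h1.le⟩]
    exact pwI_deriv_r1 h01 h12 h23 hd1 hd2 hd3 ⟨h, h1⟩
  · subst h1
    rw [pwI_eq_1 h01 h12 h23 ⟨h01.le, le_rfl⟩]
    exact pwI_deriv_n1 h01 h12 h23 hd1 hd2 hd3 v12 d12
  rcases lt_trichotomy x n2 with h2 | h2 | h2
  · rw [pwI_eq_2 h01 h12 h23 ⟨h1, h2.le⟩]
    exact pwI_deriv_r2 h01 h12 h23 hd1 hd2 hd3 ⟨h1, h2⟩
  · subst h2
    rw [pwI_eq_2 h01 h12 h23 ⟨h12, le_rfl⟩]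
    exact pwI_deriv_n2 h01 h12 h23 hd1 hd2 hd3 v23 d23
  rcases lt_trichotomy x n3 with h3 | h3 | h3
  · rw [pwI_eq_3 h01 h12 h23 ⟨h2, h3.le⟩]
    exact pwI_deriv_r3 h01 h12 h23 hd1 hd2 hd3 ⟨h2, h3⟩
  · subst h3
    rcases hv3 with h0 | ⟨h0, hd0⟩
    · exact absurd hx.2 (by rw [h0]; exact lt_irrefl _)
    · rw [pwI_eq_3 h01 h12 h23 ⟨h23, le_rfl⟩, hd0]
      exact pwI_deriv_n3 h01 h12 h23 hd1 hd2 hd3 h0 hd0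
  · rw [pwI_eq_right h01 h12 h23 h3]
    exact pwI_deriv_right h01 h12 h23 hd1 hd2 hd3 h3

/-- Endpoint derivative within `Icc (-L) L` at `-L`. -/
lemma pwI_master_left (hL : -L < L) (hn0 : -L ≤ n0) (hn3 : n3 ≤ L)
    (hv0 : n0 = -L ∨ (P1 n0 = 0 ∧ D1 n0 = 0)) :
    HasDerivWithinAt (pwI n0 n1 n2 n3 P1 P2 P3)
      (pwI n0 n1 n2 n3 D1 D2 D3 (-L)) (Icc (-L) L) (-L) := by
  rcases eq_or_lt_of_le hn0 with h | h
  · subst h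
    rw [pwI_eq_1 h01 h12 h23 ⟨le_rfl, h01.le⟩]
    exact (pwI_derivWithin_n0 h01 h12 h23 hd1 hd2 hd3).mono Icc_subset_Ici_self
  · rw [pwI_eq_left h01 h12 h23 h]
    refine ((hasDerivAt_const (-L) (0:ℝ)).congr_of_eventuallyEq ?_).hasDerivWithinAt
    filter_upwards [Iio_mem_nhds h] with y hy
    exact pwI_eq_left h01 h12 h23 hy

/-- Endpoint derivative within `Icc (-L) L` at `L`. -/
lemma pwI_master_right (hL : -L < L) (hn0 : -L ≤ n0) (hn3 : n3 ≤ L)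
    (hv3 : n3 = L ∨ (P3 n3 = 0 ∧ D3 n3 = 0)) :
    HasDerivWithinAt (pwI n0 n1 n2 n3 P1 P2 P3)
      (pwI n0 n1 n2 n3 D1 D2 D3 L) (Icc (-L) L) L := by
  rcases eq_or_lt_of_le hn3 with h | h
  · subst h
    rw [pwI_eq_3 h01 h12 h23 ⟨h23, le_rfl⟩]
    exact (pwI_derivWithin_n3 h01 h12 h23 hd1 hd2 hd3).mono Icc_subset_Iic_self
  · rw [pwI_eq_right h01 h12 h23 h]
    refine ((hasDerivAt_const L (0:ℝ)).congr_of_eventuallyEq ?_).hasDerivWithinAt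
    filter_upwards [Ioi_mem_nhds h] with y hy
    exact pwI_eq_right h01 h12 h23 hy

end master

section cont
variable {L : ℝ}
variable (h01 : n0 < n1) (h12 : n1 < n2) (h23 : n2 < n3)
variable (hc1 : Continuous P1) (hc2 : Continuous P2) (hc3 : Continuous P3)
include h01 h12 h23 hc1 hc2 hc3

/-- Master continuity lemma. -/
lemma pwI_master_cont (hn0 : -L ≤ n0) (hn3 : n3 ≤ L)
    (hv0 : n0 = -L ∨ P1 n0 = 0) (hv3 : n3 = L ∨ P3 n3 = 0)
    (v12 : P1 n1 = P2 n1) (v23 : P2 n2 = P3 n2) :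
    ContinuousOn (pwI n0 n1 n2 n3 P1 P2 P3) (Icc (-L) L) := by
  set f := pwI n0 n1 n2 n3 P1 P2 P3 with hf
  have evcont : ∀ {x : ℝ} {g : ℝ → ℝ}, Continuous g → f =ᶠ[nhds x] g → ContinuousWithinAt f (Icc (-L) L) x := by
    intro x g hg hev
    exact (hg.continuousAt.congr hev.symm).continuousWithinAt
  -- one-sided pieces
  have left_e : ∀ {x : ℝ}, x ≤ n0 → f x = (if x = n0 then P1 n0 else 0) := by
    intro x hx
    rcases eq_or_lt_of_le hx with h | h
    · rw [if_pos h, h]; exact pwI_eq_1 h01 h12 h23 ⟨le_rfl, h01.le⟩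
    · rw [if_neg (ne_of_lt h)]; exact pwI_eq_left h01 h12 h23 h
  intro x hx
  rcases lt_trichotomy x n0 with h | h | h
  · exact evcont continuous_const (pwI_ev_left h01 h12 h23 h)
  · -- x = n0
    subst h
    have hr : ContinuousWithinAt f (Ici x) x := by
      refine hc1.continuousAt.continuousWithinAt.congr_of_eventuallyEq ?_
        (pwI_eq_1 h01 h12 h23 ⟨le_rfl, h01.le⟩)
      filter_upwards [mem_nhdsWithin_of_mem_nhds (Iio_mem_nhds h01), self_mem_nhdsWithin]
        with y hy1 hy2
      exact pwI_eq_1 h01 h12 h23 ⟨hy2, le_of_lt hy1⟩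
    rcases hv0 with h0 | h0
    · exact hr.mono (by rw [h0]; exact fun y hy => hy.1)
    · have hl : ContinuousWithinAt f (Iic x) x := by
        refine (continuousWithinAt_const (b := (0:ℝ))).congr_of_eventuallyEq
          ?_ ((pwI_eq_1 h01 h12 h23 ⟨le_rfl, h01.le⟩).trans h0)
        filter_upwards [self_mem_nhdsWithin] with y hy
        rcases eq_or_lt_of_le (mem_Iic.mp hy) with h | h
        · rw [h]; exact (pwI_eq_1 h01 h12 h23 ⟨le_rfl, h01.le⟩).trans h0
        · exact pwI_eq_left h01 h12 h23 h
      have := hl.union hr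
      rw [Iic_union_Ici] at this
      exact this.mono (subset_univ _)
  rcases lt_trichotomy x n1 with h1 | h1 | h1
  · exact evcont hc1 (pwI_ev_1 h01 h12 h23 ⟨h, h1⟩)
  · subst h1
    have hl : ContinuousWithinAt f (Iic x) x := by
      refine hc1.continuousAt.continuousWithinAt.congr_of_eventuallyEq ?_
        (pwI_eq_1 h01 h12 h23 ⟨h01.le, le_rfl⟩)
      filter_upwards [mem_nhdsWithin_of_mem_nhds (Ioi_mem_nhds h01), self_mem_nhdsWithin]
        with y hy1 hy2
      exact pwI_eq_1 h01 h12 h23 ⟨le_of_lt hy1, hy2⟩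
    have hr : ContinuousWithinAt f (Ici x) x := by
      refine hc2.continuousAt.continuousWithinAt.congr_of_eventuallyEq ?_
        ((pwI_eq_1 h01 h12 h23 ⟨h01.le, le_rfl⟩).trans v12)
      filter_upwards [mem_nhdsWithin_of_mem_nhds (Iio_mem_nhds h12), self_mem_nhdsWithin]
        with y hy1 hy2
      rcases eq_or_lt_of_le (mem_Ici.mp hy2) with h | h
      · rw [← h]; exact (pwI_eq_1 h01 h12 h23 ⟨h01.le, le_rfl⟩).trans v12
      · exact pwI_eq_2 h01 h12 h23 ⟨h, le_of_lt hy1⟩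
    have := hl.union hr
    rw [Iic_union_Ici] at this
    exact this.mono (subset_univ _)
  rcases lt_trichotomy x n2 with h2 | h2 | h2
  · exact evcont hc2 (pwI_ev_2 h01 h12 h23 ⟨h1, h2⟩)
  · subst h2
    have hl : ContinuousWithinAt f (Iic x) x := by
      refine hc2.continuousAt.continuousWithinAt.congr_of_eventuallyEq ?_
        (pwI_eq_2 h01 h12 h23 ⟨h12, le_rfl⟩)
      filter_upwards [mem_nhdsWithin_of_mem_nhds (Ioi_mem_nhds h12), self_mem_nhdsWithin]
        with y hy1 hy2
      exact pwI_eq_2 h01 h12 h23 ⟨hy1, hy2⟩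
    have hr : ContinuousWithinAt f (Ici x) x := by
      refine hc3.continuousAt.continuousWithinAt.congr_of_eventuallyEq ?_
        ((pwI_eq_2 h01 h12 h23 ⟨h12, le_rfl⟩).trans v23)
      filter_upwards [mem_nhdsWithin_of_mem_nhds (Iio_mem_nhds h23), self_mem_nhdsWithin]
        with y hy1 hy2
      rcases eq_or_lt_of_le (mem_Ici.mp hy2) with h | h
      · rw [← h]; exact (pwI_eq_2 h01 h12 h23 ⟨h12, le_rfl⟩).trans v23
      · exact pwI_eq_3 h01 h12 h23 ⟨h, le_of_lt hy1⟩
    have := hl.union hr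
    rw [Iic_union_Ici] at this
    exact this.mono (subset_univ _)
  rcases lt_trichotomy x n3 with h3 | h3 | h3
  · exact evcont hc3 (pwI_ev_3 h01 h12 h23 ⟨h2, h3⟩)
  · subst h3
    have hl : ContinuousWithinAt f (Iic x) x := by
      refine hc3.continuousAt.continuousWithinAt.congr_of_eventuallyEq ?_
        (pwI_eq_3 h01 h12 h23 ⟨h23, le_rfl⟩)
      filter_upwards [mem_nhdsWithin_of_mem_nhds (Ioi_mem_nhds h23), self_mem_nhdsWithin]
        with y hy1 hy2
      exact pwI_eq_3 h01 h12 h23 ⟨hy1, hy2⟩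
    rcases hv3 with h0 | h0
    · exact hl.mono (by rw [h0]; exact fun y hy => hy.2)
    · have hr : ContinuousWithinAt f (Ici x) x := by
        refine (continuousWithinAt_const (b := (0:ℝ))).congr_of_eventuallyEq
          ?_ ((pwI_eq_3 h01 h12 h23 ⟨h23, le_rfl⟩).trans h0)
        filter_upwards [self_mem_nhdsWithin] with y hy
        rcases eq_or_lt_of_le (mem_Ici.mp hy) with h | h
        · rw [← h]; exact (pwI_eq_3 h01 h12 h23 ⟨h23, le_rfl⟩).trans h0
        · exact pwI_eq_right h01 h12 h23 h
      have := hl.union hr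
      rw [Iic_union_Ici] at this
      exact this.mono (subset_univ _)
  · exact evcont continuous_const (pwI_ev_right h01 h12 h23 h3)

end cont

/-- Bundled data for a 1D basis pair: `ψ` is `C¹` on `[-L,L]` with derivative `g`,
`g` is piecewise `C¹` with derivative `-φ` off a finite set, `φ` measurable bounded. -/
structure OneD (L : ℝ) (φ ψ g : ℝ → ℝ) : Prop where
  cont_g : ContinuousOn g (Icc (-L) L)
  deriv_psi : ∀ x ∈ Ioo (-L) L, HasDerivAt ψ (g x) x
  derivW_left : HasDerivWithinAt ψ (g (-L)) (Icc (-L) L) (-L)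
  derivW_right : HasDerivWithinAt ψ (g L) (Icc (-L) L) L
  psi_left : ψ (-L) = 0
  psi_right : ψ L = 0
  deriv_g : ∃ s : Finset ℝ, ∀ x ∈ Ioo (-L) L, x ∉ s → HasDerivAt g (-(φ x)) x
  meas_phi : Measurable φ
  bdd_phi : ∀ x, |φ x| ≤ 2

namespace OneD

variable {L : ℝ} {φ ψ g : ℝ → ℝ} (hL : 0 < L) (hd : OneD L φ ψ g)
include hL hd

lemma derivW : ∀ x ∈ Icc (-L) L, HasDerivWithinAt ψ (g x) (Icc (-L) L) x := by
  intro x hx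
  rcases eq_or_lt_of_le hx.1 with h | h
  · rw [← h]; exact hd.derivW_left
  rcases eq_or_lt_of_le hx.2 with h2 | h2
  · rw [h2]; exact hd.derivW_right
  · exact (hd.deriv_psi x ⟨h, h2⟩).hasDerivWithinAt

lemma cont_psi : ContinuousOn ψ (Icc (-L) L) :=
  fun x hx => (hd.derivW hL x hx).continuousWithinAt

lemma contDiffOn_psi : ContDiffOn ℝ 1 ψ (Icc (-L) L) := by
  have hUD : UniqueDiffOn ℝ (Icc (-L) L) := uniqueDiffOn_Icc (by linarith)
  have h10 : (1 : WithTop ℕ∞) = 0 + 1 := (zero_add 1).symm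
  rw [h10, contDiffOn_succ_iff_derivWithin hUD]
  refine ⟨fun x hx => (hd.derivW hL x hx).differentiableWithinAt, fun h => by simp at h, ?_⟩
  rw [contDiffOn_zero]
  refine hd.cont_g.congr fun x hx => ?_
  exact (hd.derivW hL x hx).derivWithin (hUD x hx)

/-- 1D integration by parts against a test function vanishing at the endpoints. -/
lemma ibp {u u' : ℝ → ℝ} (hu : ∀ t, HasDerivAt u (u' t) t)
    (huc : Continuous u) (hu'c : Continuous u') (h0 : u (-L) = 0) (h1 : u L = 0) :
    ∫ t in Ioo (-L) L, g t * u' t = ∫ t in Ioo (-L) L, φ t * u t := by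
  have hab : (-L) ≤ L := by linarith
  obtain ⟨s, hs⟩ := hd.deriv_g
  set D : ℝ → ℝ := fun t => g t * u' t - φ t * u t with hD
  set F : ℝ → ℝ := fun t => g t * u t with hF
  have hFc : ContinuousOn F (Icc (-L) L) := hd.cont_g.mul huc.continuousOn
  have hFd : ∀ x ∈ Ioo (-L) L, x ∉ s → HasDerivAt F (D x) x := by
    intro x hx hxs
    have := (hs x hx hxs).mul (hu x)
    exact this.congr_deriv (by simp only [hD]; ring)
  -- integrability
  have hi1 : IntervalIntegrable (fun t => g t * u' t) volume (-L) L :=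
    (hd.cont_g.mul hu'c.continuousOn).intervalIntegrable_of_Icc hab
  obtain ⟨Cu, hCu⟩ := isCompact_Icc.exists_bound_of_continuousOn
    (huc.continuousOn : ContinuousOn u (Icc (-L) L))
  have hi2on : IntegrableOn (fun t => φ t * u t) (Ioc (-L) L) volume := by
    refine ⟨((hd.meas_phi.mul huc.measurable).aestronglyMeasurable).restrict, ?_⟩
    refine HasFiniteIntegral.restrict_of_bounded (C := 2 * Cu) measure_Ioc_lt_top ?_
    rw [ae_restrict_iff' measurableSet_Ioc]
    refine ae_of_all _ fun t ht => ?_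
    have h1' : |φ t| ≤ 2 := hd.bdd_phi t
    have h2' : |u t| ≤ Cu := by
      have := hCu t ⟨ht.1.le, ht.2⟩
      simpa [Real.norm_eq_abs] using this
    have : ‖φ t * u t‖ = |φ t| * |u t| := by
      simp [Real.norm_eq_abs, abs_mul]
    rw [this]
    have h0' : (0:ℝ) ≤ |u t| := abs_nonneg _
    nlinarith [abs_nonneg (φ t)]
  have hi2 : IntervalIntegrable (fun t => φ t * u t) volume (-L) L :=
    (intervalIntegrable_iff_integrableOn_Ioc_of_le hab).mpr hi2on
  have hiD : IntervalIntegrable D volume (-L) L := hi1.sub hi2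
  have key : ∫ y in (-L)..L, D y = F L - F (-L) := ftc_finset s hab hFc hFd hiD
  have hF0 : F L - F (-L) = 0 := by simp [hF, h0, h1]
  rw [hF0, intervalIntegral.integral_of_le hab, integral_Ioc_eq_integral_Ioo] at key
  have hi1oo : IntegrableOn (fun t => g t * u' t) (Ioo (-L) L) volume := by
    refine IntegrableOn.mono_set ?_ Ioo_subset_Ioc_self
    exact (intervalIntegrable_iff_integrableOn_Ioc_of_le hab).mp hi1
  have hi2oo : IntegrableOn (fun t => φ t * u t) (Ioo (-L) L) volume :=
    hi2on.mono_set Ioo_subset_Ioc_self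
  rw [integral_sub hi1oo hi2oo] at key
  linarith [key]

end OneD

section Main2D

/-- The 2D weak-solution statement, abstracted over the 1D data. -/
theorem main2D {L : ℝ} (hL : 0 < L) (c : ℝ) {φ1 ψ1 g1 φ2 ψ2 g2 : ℝ → ℝ}
    (h1 : OneD L φ1 ψ1 g1) (h2 : OneD L φ2 ψ2 g2) :
    ContDiffOn ℝ 1 (fun x : ℝ × ℝ => c * (ψ1 x.1 * ψ2 x.2)) (Icc (-L) L ×ˢ Icc (-L) L) ∧
    (∀ x ∈ frontier (Ioo (-L) L ×ˢ Ioo (-L) L), c * (ψ1 x.1 * ψ2 x.2) = 0) ∧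
    ∀ w : ℝ × ℝ → ℝ, ContDiff ℝ (⊤ : ℕ∞) w → HasCompactSupport w →
      tsupport w ⊆ Ioo (-L) L ×ˢ Ioo (-L) L →
      ∫ x in Ioo (-L) L ×ˢ Ioo (-L) L,
          (fderiv ℝ (fun y : ℝ × ℝ => c * (ψ1 y.1 * ψ2 y.2)) x ((1 : ℝ), (0 : ℝ))
            * fderiv ℝ w x ((1 : ℝ), (0 : ℝ))
          + fderiv ℝ (fun y : ℝ × ℝ => c * (ψ1 y.1 * ψ2 y.2)) x ((0 : ℝ), (1 : ℝ))
            * fderiv ℝ w x ((0 : ℝ), (1 : ℝ)))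
        = ∫ x in Ioo (-L) L ×ˢ Ioo (-L) L,
            (c * (φ1 x.1 * ψ2 x.2 + ψ1 x.1 * φ2 x.2)) * w x := by
  have hLL : -L < L := by linarith
  have hQm : MeasurableSet (Ioo (-L) L ×ˢ Ioo (-L) L) :=
    measurableSet_Ioo.prod measurableSet_Ioo
  have hQfin : volume (Ioo (-L) L ×ˢ Ioo (-L) L) ≠ ⊤ := by
    have hsub : Ioo (-L) L ×ˢ Ioo (-L) L ⊆ Icc (-L) L ×ˢ Icc (-L) L :=
      prod_mono Ioo_subset_Icc_self Ioo_subset_Icc_self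
    have hcpt : IsCompact (Icc (-L) L ×ˢ Icc (-L) L) := isCompact_Icc.prod isCompact_Icc
    exact ne_of_lt (lt_of_le_of_lt (measure_mono hsub) hcpt.measure_lt_top)
  have cψ1 : ContinuousOn ψ1 (Icc (-L) L) := h1.cont_psi hL
  have cψ2 : ContinuousOn ψ2 (Icc (-L) L) := h2.cont_psi hL
  have cg1 : ContinuousOn g1 (Icc (-L) L) := h1.cont_g
  have cg2 : ContinuousOn g2 (Icc (-L) L) := h2.cont_g
  refine ⟨?_, ?_, ?_⟩
  · -- Part 1 : C¹ smoothness
    have A : ContDiffOn ℝ 1 (fun x : ℝ × ℝ => ψ1 x.1) (Icc (-L) L ×ˢ Icc (-L) L) :=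
      (h1.contDiffOn_psi hL).comp contDiff_fst.contDiffOn (fun x hx => hx.1)
    have B : ContDiffOn ℝ 1 (fun x : ℝ × ℝ => ψ2 x.2) (Icc (-L) L ×ˢ Icc (-L) L) :=
      (h2.contDiffOn_psi hL).comp contDiff_snd.contDiffOn (fun x hx => hx.2)
    exact contDiffOn_const.mul (A.mul B)
  · -- Part 2 : boundary values
    intro x hx
    have hQo : IsOpen (Ioo (-L) L ×ˢ Ioo (-L) L) := isOpen_Ioo.prod isOpen_Ioo
    rw [hQo.frontier_eq] at hx
    obtain ⟨hxc, hxn⟩ := hx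
    rw [closure_prod_eq, closure_Ioo (by linarith : -L ≠ L)] at hxc
    have hor : x.1 ∉ Ioo (-L) L ∨ x.2 ∉ Ioo (-L) L := by
      by_contra hcon
      push_neg at hcon
      exact hxn (mem_prod.mpr ⟨hcon.1, hcon.2⟩)
    rcases hor with h | h
    · have hcs : x.1 = -L ∨ x.1 = L := by
        rcases eq_or_lt_of_le hxc.1.1 with hh | hh
        · exact Or.inl hh.symm
        rcases eq_or_lt_of_le hxc.1.2 with hh2 | hh2
        · exact Or.inr hh2
        · exact absurd ⟨hh, hh2⟩ h
      rcases hcs with hh | hh <;> rw [hh]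
      · rw [h1.psi_left]; ring
      · rw [h1.psi_right]; ring
    · have hcs : x.2 = -L ∨ x.2 = L := by
        rcases eq_or_lt_of_le hxc.2.1 with hh | hh
        · exact Or.inl hh.symm
        rcases eq_or_lt_of_le hxc.2.2 with hh2 | hh2
        · exact Or.inr hh2
        · exact absurd ⟨hh, hh2⟩ h
      rcases hcs with hh | hh <;> rw [hh]
      · rw [h2.psi_left]; ring
      · rw [h2.psi_right]; ring
  · -- Part 3 : weak formulation
    intro w hw hwcs hsupp
    set s : Set ℝ := Ioo (-L) L with hs
    set Q : Set (ℝ × ℝ) := s ×ˢ s with hQdef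
    set Ψ : ℝ × ℝ → ℝ := fun y => c * (ψ1 y.1 * ψ2 y.2) with hΨ
    set W1 : ℝ × ℝ → ℝ := fun x => fderiv ℝ w x ((1:ℝ), (0:ℝ)) with hW1
    set W2 : ℝ × ℝ → ℝ := fun x => fderiv ℝ w x ((0:ℝ), (1:ℝ)) with hW2
    have hwc : Continuous w := hw.continuous
    have hwd : Differentiable ℝ w := hw.differentiable (by simp)
    have hfd : Continuous (fderiv ℝ w) := hw.continuous_fderiv (by simp)
    have contW1 : Continuous W1 := hfd.clm_apply continuous_const
    have contW2 : Continuous W2 := hfd.clm_apply continuous_const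
    have hw0 : ∀ p : ℝ × ℝ, p ∉ Q → w p = 0 := fun p hp =>
      image_eq_zero_of_notMem_tsupport (fun hmem => hp (hsupp hmem))
    -- derivative of Ψ on Q
    have hfder : ∀ p ∈ Q, fderiv ℝ Ψ p ((1:ℝ),(0:ℝ)) = c * (g1 p.1 * ψ2 p.2)
        ∧ fderiv ℝ Ψ p ((0:ℝ),(1:ℝ)) = c * (ψ1 p.1 * g2 p.2) := by
      intro p hp
      have hp1 : HasFDerivAt (fun y : ℝ × ℝ => ψ1 y.1)
          ((g1 p.1) • ContinuousLinearMap.fst ℝ ℝ ℝ) p :=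
        (h1.deriv_psi p.1 hp.1).comp_hasFDerivAt p hasFDerivAt_fst
      have hp2 : HasFDerivAt (fun y : ℝ × ℝ => ψ2 y.2)
          ((g2 p.2) • ContinuousLinearMap.snd ℝ ℝ ℝ) p :=
        (h2.deriv_psi p.2 hp.2).comp_hasFDerivAt p hasFDerivAt_snd
      have hco : HasFDerivAt Ψ
          (c • (ψ1 p.1 • ((g2 p.2) • ContinuousLinearMap.snd ℝ ℝ ℝ)
            + ψ2 p.2 • ((g1 p.1) • ContinuousLinearMap.fst ℝ ℝ ℝ))) p :=
        (hp1.mul hp2).const_mul c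
      rw [hco.fderiv]
      constructor <;>
      · simp only [ContinuousLinearMap.smul_apply, ContinuousLinearMap.add_apply,
          ContinuousLinearMap.coe_fst', ContinuousLinearMap.coe_snd', smul_eq_mul]
        ring
    -- integrability helper
    have intOn : ∀ {f : ℝ × ℝ → ℝ}, AEStronglyMeasurable f (volume.restrict Q) →
        ∀ M : ℝ, (∀ x ∈ Q, |f x| ≤ M) → IntegrableOn f Q := by
      intro f hm M hb
      refine ⟨hm, HasFiniteIntegral.restrict_of_bounded (C := M) hQfin.lt_top ?_⟩
      rw [ae_restrict_iff' hQm]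
      exact ae_of_all _ fun x hx => by simpa [Real.norm_eq_abs] using hb x hx
    have cg1Q : ContinuousOn (fun x : ℝ × ℝ => g1 x.1) Q :=
      cg1.comp continuous_fst.continuousOn (fun x hx => Ioo_subset_Icc_self hx.1)
    have cg2Q : ContinuousOn (fun x : ℝ × ℝ => g2 x.2) Q :=
      cg2.comp continuous_snd.continuousOn (fun x hx => Ioo_subset_Icc_self hx.2)
    have cψ1Q : ContinuousOn (fun x : ℝ × ℝ => ψ1 x.1) Q :=
      cψ1.comp continuous_fst.continuousOn (fun x hx => Ioo_subset_Icc_self hx.1)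
    have cψ2Q : ContinuousOn (fun x : ℝ × ℝ => ψ2 x.2) Q :=
      cψ2.comp continuous_snd.continuousOn (fun x hx => Ioo_subset_Icc_self hx.2)
    -- bounds
    obtain ⟨Cg1, hCg1⟩ := isCompact_Icc.exists_bound_of_continuousOn cg1
    obtain ⟨Cg2, hCg2⟩ := isCompact_Icc.exists_bound_of_continuousOn cg2
    obtain ⟨Cψ1, hCψ1⟩ := isCompact_Icc.exists_bound_of_continuousOn cψ1
    obtain ⟨Cψ2, hCψ2⟩ := isCompact_Icc.exists_bound_of_continuousOn cψ2
    obtain ⟨Cw, hCw⟩ := hwcs.exists_bound_of_continuous hwc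
    obtain ⟨CW1, hCW1⟩ :=
      (hwcs.fderiv_apply (𝕜 := ℝ) ((1:ℝ),(0:ℝ))).exists_bound_of_continuous contW1
    obtain ⟨CW2, hCW2⟩ :=
      (hwcs.fderiv_apply (𝕜 := ℝ) ((0:ℝ),(1:ℝ))).exists_bound_of_continuous contW2
    -- a product bound helper
    have pbd : ∀ (a b d e Cb Cd Ce : ℝ), |b| ≤ Cb → |d| ≤ Cd → |e| ≤ Ce →
        |a * (b * d) * e| ≤ |a| * (Cb * Cd) * Ce := by
      intro a b d e Cb Cd Ce hb hd he
      have hCb : (0:ℝ) ≤ Cb := (abs_nonneg b).trans hb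
      have hCd : (0:ℝ) ≤ Cd := (abs_nonneg d).trans hd
      have h1' : |a * (b * d) * e| = |a| * (|b| * |d|) * |e| := by
        rw [abs_mul, abs_mul, abs_mul]
      rw [h1']
      have h2' : |b| * |d| ≤ Cb * Cd := mul_le_mul hb hd (abs_nonneg d) hCb
      have h3' : |a| * (|b| * |d|) ≤ |a| * (Cb * Cd) :=
        mul_le_mul_of_nonneg_left h2' (abs_nonneg a)
      exact mul_le_mul h3' he (abs_nonneg e)
        (mul_nonneg (abs_nonneg a) (mul_nonneg hCb hCd))
    set A : ℝ × ℝ → ℝ := fun x => c * (g1 x.1 * ψ2 x.2) * W1 x with hA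
    set B : ℝ × ℝ → ℝ := fun x => c * (ψ1 x.1 * g2 x.2) * W2 x with hB
    set A' : ℝ × ℝ → ℝ := fun x => c * (φ1 x.1 * ψ2 x.2) * w x with hA'
    set B' : ℝ × ℝ → ℝ := fun x => c * (ψ1 x.1 * φ2 x.2) * w x with hB'
    have intA : IntegrableOn A Q := by
      refine intOn ((aestronglyMeasurable_const.mul
        ((cg1Q.aestronglyMeasurable hQm).mul (cψ2Q.aestronglyMeasurable hQm))).mul
        contW1.aestronglyMeasurable.restrict) (|c| * (Cg1 * Cψ2) * CW1) fun x hx => ?_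
      exact pbd _ _ _ _ _ _ _
        (by simpa [Real.norm_eq_abs] using hCg1 x.1 (Ioo_subset_Icc_self hx.1))
        (by simpa [Real.norm_eq_abs] using hCψ2 x.2 (Ioo_subset_Icc_self hx.2))
        (by simpa [Real.norm_eq_abs] using hCW1 x)
    have intB : IntegrableOn B Q := by
      refine intOn ((aestronglyMeasurable_const.mul
        ((cψ1Q.aestronglyMeasurable hQm).mul (cg2Q.aestronglyMeasurable hQm))).mul
        contW2.aestronglyMeasurable.restrict) (|c| * (Cψ1 * Cg2) * CW2) fun x hx => ?_
      exact pbd _ _ _ _ _ _ _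
        (by simpa [Real.norm_eq_abs] using hCψ1 x.1 (Ioo_subset_Icc_self hx.1))
        (by simpa [Real.norm_eq_abs] using hCg2 x.2 (Ioo_subset_Icc_self hx.2))
        (by simpa [Real.norm_eq_abs] using hCW2 x)
    have intA' : IntegrableOn A' Q := by
      refine intOn ((aestronglyMeasurable_const.mul
        (((h1.meas_phi.comp measurable_fst).aestronglyMeasurable.restrict).mul
          (cψ2Q.aestronglyMeasurable hQm))).mul
        hwc.aestronglyMeasurable.restrict) (|c| * (2 * Cψ2) * Cw) fun x hx => ?_
      exact pbd _ _ _ _ _ _ _ (h1.bdd_phi x.1)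
        (by simpa [Real.norm_eq_abs] using hCψ2 x.2 (Ioo_subset_Icc_self hx.2))
        (by simpa [Real.norm_eq_abs] using hCw x)
    have intB' : IntegrableOn B' Q := by
      refine intOn ((aestronglyMeasurable_const.mul
        ((cψ1Q.aestronglyMeasurable hQm).mul
          ((h2.meas_phi.comp measurable_snd).aestronglyMeasurable.restrict))).mul
        hwc.aestronglyMeasurable.restrict) (|c| * (Cψ1 * 2) * Cw) fun x hx => ?_
      exact pbd _ _ _ _ _ _ _
        (by simpa [Real.norm_eq_abs] using hCψ1 x.1 (Ioo_subset_Icc_self hx.1))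
        (h2.bdd_phi x.2)
        (by simpa [Real.norm_eq_abs] using hCw x)
    -- product measure plumbing
    have prodQ : (volume.restrict s).prod (volume.restrict s)
        = (volume : Measure (ℝ × ℝ)).restrict Q := by
      rw [Measure.prod_restrict, hQdef, ← Measure.volume_eq_prod]
    -- chain for A
    have chainA : ∫ x in Q, A x = ∫ x in Q, A' x := by
      have intA2 : Integrable A ((volume.restrict s).prod (volume.restrict s)) := by
        rw [prodQ]; exact intA
      have intA'2 : Integrable A' ((volume.restrict s).prod (volume.restrict s)) := by
        rw [prodQ]; exact intA'
      have inner_eq : ∀ x2 : ℝ,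
          (∫ x1 in s, A (x1, x2)) = ∫ x1 in s, A' (x1, x2) := by
        intro x2
        have hu : ∀ t : ℝ, HasDerivAt (fun t => w (t, x2)) (W1 (t, x2)) t := by
          intro t
          have hin : HasDerivAt (fun t : ℝ => (t, x2)) ((1:ℝ), (0:ℝ)) t :=
            (hasDerivAt_id t).prodMk (hasDerivAt_const t x2)
          exact ((hwd (t, x2)).hasFDerivAt).comp_hasDerivAt t hin
        have hibp := h1.ibp hL hu (hwc.comp (continuous_id.prodMk continuous_const))
          (contW1.comp (continuous_id.prodMk continuous_const))
          (hw0 (-L, x2) (fun hm => absurd hm.1.1 (lt_irrefl (-L))))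
          (hw0 (L, x2) (fun hm => absurd hm.1.2 (lt_irrefl L)))
        calc (∫ x1 in s, A (x1, x2))
            = ∫ x1 in s, (c * ψ2 x2) * (g1 x1 * W1 (x1, x2)) :=
              integral_congr_ae (ae_of_all _ fun x1 => by simp only [hA]; ring)
          _ = (c * ψ2 x2) * ∫ x1 in s, g1 x1 * W1 (x1, x2) := integral_const_mul _ _
          _ = (c * ψ2 x2) * ∫ x1 in s, φ1 x1 * w (x1, x2) := by rw [hibp]
          _ = ∫ x1 in s, (c * ψ2 x2) * (φ1 x1 * w (x1, x2)) := (integral_const_mul _ _).symm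
          _ = ∫ x1 in s, A' (x1, x2) :=
              integral_congr_ae (ae_of_all _ fun x1 => by simp only [hA']; ring)
      calc ∫ x in Q, A x = ∫ x, A x ∂((volume.restrict s).prod (volume.restrict s)) := by
            rw [prodQ]
        _ = ∫ x2, (∫ x1, A (x1, x2) ∂(volume.restrict s)) ∂(volume.restrict s) :=
            integral_prod_symm A intA2
        _ = ∫ x2, (∫ x1, A' (x1, x2) ∂(volume.restrict s)) ∂(volume.restrict s) :=
            integral_congr_ae (ae_of_all _ fun x2 => inner_eq x2)
        _ = ∫ x, A' x ∂((volume.restrict s).prod (volume.restrict s)) :=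
            (integral_prod_symm A' intA'2).symm
        _ = ∫ x in Q, A' x := by rw [prodQ]
    -- chain for B
    have chainB : ∫ x in Q, B x = ∫ x in Q, B' x := by
      have intB2 : Integrable B ((volume.restrict s).prod (volume.restrict s)) := by
        rw [prodQ]; exact intB
      have intB'2 : Integrable B' ((volume.restrict s).prod (volume.restrict s)) := by
        rw [prodQ]; exact intB'
      have inner_eq : ∀ x1 : ℝ,
          (∫ x2 in s, B (x1, x2)) = ∫ x2 in s, B' (x1, x2) := by
        intro x1
        have hu : ∀ t : ℝ, HasDerivAt (fun t => w (x1, t)) (W2 (x1, t)) t := by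
          intro t
          have hin : HasDerivAt (fun t : ℝ => (x1, t)) ((0:ℝ), (1:ℝ)) t :=
            (hasDerivAt_const t x1).prodMk (hasDerivAt_id t)
          exact ((hwd (x1, t)).hasFDerivAt).comp_hasDerivAt t hin
        have hibp := h2.ibp hL hu (hwc.comp (continuous_const.prodMk continuous_id))
          (contW2.comp (continuous_const.prodMk continuous_id))
          (hw0 (x1, -L) (fun hm => absurd hm.2.1 (lt_irrefl (-L))))
          (hw0 (x1, L) (fun hm => absurd hm.2.2 (lt_irrefl L)))
        calc (∫ x2 in s, B (x1, x2))
            = ∫ x2 in s, (c * ψ1 x1) * (g2 x2 * W2 (x1, x2)) :=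
              integral_congr_ae (ae_of_all _ fun x2 => by simp only [hB]; ring)
          _ = (c * ψ1 x1) * ∫ x2 in s, g2 x2 * W2 (x1, x2) := integral_const_mul _ _
          _ = (c * ψ1 x1) * ∫ x2 in s, φ2 x2 * w (x1, x2) := by rw [hibp]
          _ = ∫ x2 in s, (c * ψ1 x1) * (φ2 x2 * w (x1, x2)) := (integral_const_mul _ _).symm
          _ = ∫ x2 in s, B' (x1, x2) :=
              integral_congr_ae (ae_of_all _ fun x2 => by simp only [hB']; ring)
      calc ∫ x in Q, B x = ∫ x, B x ∂((volume.restrict s).prod (volume.restrict s)) := by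
            rw [prodQ]
        _ = ∫ x1, (∫ x2, B (x1, x2) ∂(volume.restrict s)) ∂(volume.restrict s) :=
            integral_prod B intB2
        _ = ∫ x1, (∫ x2, B' (x1, x2) ∂(volume.restrict s)) ∂(volume.restrict s) :=
            integral_congr_ae (ae_of_all _ fun x1 => inner_eq x1)
        _ = ∫ x, B' x ∂((volume.restrict s).prod (volume.restrict s)) :=
            (integral_prod B' intB'2).symm
        _ = ∫ x in Q, B' x := by rw [prodQ]
    -- final assembly
    have e1 : (∫ x in Q, (fderiv ℝ Ψ x ((1:ℝ),(0:ℝ)) * fderiv ℝ w x ((1:ℝ),(0:ℝ))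
          + fderiv ℝ Ψ x ((0:ℝ),(1:ℝ)) * fderiv ℝ w x ((0:ℝ),(1:ℝ))))
        = ∫ x in Q, (A x + B x) := by
      refine setIntegral_congr_fun hQm fun x hx => ?_
      simp only [hA, hB, hW1, hW2]
      rw [(hfder x hx).1, (hfder x hx).2]
    have e2 : (∫ x in Q, (c * (φ1 x.1 * ψ2 x.2 + ψ1 x.1 * φ2 x.2)) * w x)
        = ∫ x in Q, (A' x + B' x) := by
      refine setIntegral_congr_fun hQm fun x hx => ?_
      simp only [hA', hB']
      ring
    rw [e1, e2, integral_add intA intB, integral_add intA' intB', chainA, chainB]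

end Main2D

section Nodes

variable {L : ℝ} {J : ℕ}

lemma meshH_pos (hL : 0 < L) (hJ : 0 < J) : 0 < meshH L J := by
  have : (0:ℝ) < J := by exact_mod_cast hJ
  exact div_pos (by linarith) this

lemma nodeX_zero : nodeX L J 0 = -L := by simp [nodeX]

lemma nodeX_succ (k : ℕ) : nodeX L J (k+1) = nodeX L J k + meshH L J := by
  simp only [nodeX]
  push_cast
  ring

lemma nodeX_last (hJ : J ≠ 0) : nodeX L J J = L := by
  have hJ' : (J:ℝ) ≠ 0 := by exact_mod_cast hJ
  simp only [nodeX, meshH]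
  field_simp
  ring

lemma nodeX_lt (hL : 0 < L) (hJ : 0 < J) {k m : ℕ} (hkm : k < m) :
    nodeX L J k < nodeX L J m := by
  have h := meshH_pos hL hJ
  have hc : (k:ℝ) < m := by exact_mod_cast hkm
  simp only [nodeX]
  have := mul_lt_mul_of_pos_right hc h
  linarith

lemma nodeX_le (hL : 0 < L) (hJ : 0 < J) {k m : ℕ} (hkm : k ≤ m) :
    nodeX L J k ≤ nodeX L J m := by
  rcases eq_or_lt_of_le hkm with h | h
  · rw [h]
  · exact (nodeX_lt hL hJ h).le

lemma nodeX_ge_left (hL : 0 < L) (hJ : 0 < J) (k : ℕ) : -L ≤ nodeX L J k := by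
  have := nodeX_le hL hJ (Nat.zero_le k)
  rwa [nodeX_zero] at this

lemma nodeX_le_right (hL : 0 < L) (hJ : 0 < J) {k : ℕ} (hk : k ≤ J) :
    nodeX L J k ≤ L := by
  have := nodeX_le hL hJ hk
  rwa [nodeX_last hJ.ne'] at this

end Nodes


section Instantiation

/-- Derivative functions `g_i = ψ_i'`. -/
def gF (L : ℝ) (J : ℕ) (i : ℕ) : ℝ → ℝ :=
  if i = 1 then
    pwI (nodeX L J 0) (nodeX L J 1) (nodeX L J 2) L
      (fun x => meshH L J - 3/2 * (x - nodeX L J 0))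
      (fun x => 1/2 * (x - nodeX L J 1) - meshH L J / 2)
      (fun _ => (0:ℝ))
  else if i = J then
    pwI (nodeX L J (J-3)) (nodeX L J (J-2)) (nodeX L J (J-1)) (nodeX L J J)
      (fun _ => (0:ℝ))
      (fun x => -(1/2) * (nodeX L J (J-1) - x) + meshH L J / 2)
      (fun x => 3/2 * (nodeX L J J - x) - meshH L J)
  else
    pwI (nodeX L J (i-2)) (nodeX L J (i-1)) (nodeX L J i) (nodeX L J (i+1))
      (fun x => 1/2 * (x - nodeX L J (i-2)))
      (fun x => -(x - nodeX L J (i-1)) + meshH L J / 2)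
      (fun x => -(1/2) * (nodeX L J (i+1) - x))

lemma piece_Icc_eq_Ioc {a b : ℝ} (hab : a ≤ b) {f : ℝ → ℝ} (hf : f a = 0) (x : ℝ) :
    (if x ∈ Icc a b then f x else 0) = (if x ∈ Ioc a b then f x else 0) := by
  rcases eq_or_ne x a with rfl | hx
  · rw [if_pos (mem_Icc.mpr ⟨le_rfl, hab⟩), if_neg (by simp), hf]
  · refine if_congr ?_ rfl rfl
    simp only [mem_Icc, mem_Ioc]
    constructor
    · rintro ⟨hc1, hc2⟩; exact ⟨lt_of_le_of_ne hc1 (Ne.symm hx), hc2⟩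
    · rintro ⟨hc1, hc2⟩; exact ⟨hc1.le, hc2⟩

lemma mem_Icc_eq_mem_Ioc {a b x : ℝ} (hx : x ≠ a) : (x ∈ Icc a b) = (x ∈ Ioc a b) := by
  rw [eq_iff_iff]
  simp only [mem_Icc, mem_Ioc]
  constructor
  · rintro ⟨hc1, hc2⟩; exact ⟨lt_of_le_of_ne hc1 (Ne.symm hx), hc2⟩
  · rintro ⟨hc1, hc2⟩; exact ⟨hc1.le, hc2⟩

lemma oneD_main (L : ℝ) (hL : 0 < L) (J : ℕ) (hJ : 3 ≤ J) (i : ℕ)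
    (hi1 : 1 ≤ i) (hiJ : i ≤ J) : OneD L (phiF L J i) (psiF L J i) (gF L J i) := by
  have hJ0 : 0 < J := by omega
  have hLL : -L < L := by linarith
  by_cases h1 : i = 1
  · -- ===================== case i = 1 =====================
    subst h1
    have e0 : nodeX L J 0 = -L := nodeX_zero
    have e1 : nodeX L J 1 = nodeX L J 0 + meshH L J := nodeX_succ 0
    have e2 : nodeX L J 2 = nodeX L J 1 + meshH L J := nodeX_succ 1
    have h01 : nodeX L J 0 < nodeX L J 1 := nodeX_lt hL hJ0 (by omega)
    have h12 : nodeX L J 1 < nodeX L J 2 := nodeX_lt hL hJ0 (by omega)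
    have h23 : nodeX L J 2 < L := by
      have h' := nodeX_lt hL hJ0 (show 2 < J by omega)
      rwa [nodeX_last (by omega)] at h'
    have hpsi : psiF L J 1 = pwI (nodeX L J 0) (nodeX L J 1) (nodeX L J 2) L
        (fun x => -(3:ℝ)/4 * (x - nodeX L J 0)^2 + meshH L J * (x - nodeX L J 0))
        (fun x => (1:ℝ)/4 * (x - nodeX L J 1)^2 - meshH L J / 2 * (x - nodeX L J 1)
          + (meshH L J)^2/4)
        (fun _ => (0:ℝ)) := by
      funext x
      simp only [psiF, pwI, reduceIte, ite_self, add_zero]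
    have hg : gF L J 1 = pwI (nodeX L J 0) (nodeX L J 1) (nodeX L J 2) L
        (fun x => meshH L J - 3/2 * (x - nodeX L J 0))
        (fun x => 1/2 * (x - nodeX L J 1) - meshH L J / 2)
        (fun _ => (0:ℝ)) := by
      simp only [gF, reduceIte]
    have hd1 : ∀ x : ℝ, HasDerivAt
        (fun y => -(3:ℝ)/4 * (y - nodeX L J 0)^2 + meshH L J * (y - nodeX L J 0))
        (meshH L J - 3/2 * (x - nodeX L J 0)) x := fun x =>
      hasDerivAt_of_quad (-(3:ℝ)/4) (3/2 * nodeX L J 0 + meshH L J)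
        (-(3:ℝ)/4 * (nodeX L J 0)^2 - meshH L J * nodeX L J 0) (fun y => by ring) (by ring)
    have hd2 : ∀ x : ℝ, HasDerivAt
        (fun y => (1:ℝ)/4 * (y - nodeX L J 1)^2 - meshH L J / 2 * (y - nodeX L J 1)
          + (meshH L J)^2/4)
        (1/2 * (x - nodeX L J 1) - meshH L J / 2) x := fun x =>
      hasDerivAt_of_quad ((1:ℝ)/4) (-(1:ℝ)/2 * nodeX L J 1 - meshH L J / 2)
        ((1:ℝ)/4 * (nodeX L J 1)^2 + meshH L J / 2 * nodeX L J 1 + (meshH L J)^2/4)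
        (fun y => by ring) (by ring)
    have hd3 : ∀ x : ℝ, HasDerivAt (fun _ : ℝ => (0:ℝ)) ((0:ℝ)) x := fun x =>
      hasDerivAt_const x 0
    have hdd1 : ∀ x : ℝ, HasDerivAt (fun y => meshH L J - 3/2 * (y - nodeX L J 0))
        (-(3:ℝ)/2) x := fun x =>
      hasDerivAt_of_quad 0 (-(3:ℝ)/2) (meshH L J + 3/2 * nodeX L J 0)
        (fun y => by ring) (by ring)
    have hdd2 : ∀ x : ℝ, HasDerivAt (fun y => 1/2 * (y - nodeX L J 1) - meshH L J / 2)
        ((1:ℝ)/2) x := fun x =>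
      hasDerivAt_of_quad 0 ((1:ℝ)/2) (-(1:ℝ)/2 * nodeX L J 1 - meshH L J / 2)
        (fun y => by ring) (by ring)
    refine { cont_g := ?_, deriv_psi := ?_, derivW_left := ?_, derivW_right := ?_,
             psi_left := ?_, psi_right := ?_, deriv_g := ?_, meas_phi := ?_, bdd_phi := ?_ }
    · rw [hg]
      exact pwI_master_cont h01 h12 h23 (by fun_prop) (by fun_prop) (by fun_prop)
        (le_of_eq e0.symm) le_rfl (Or.inl e0) (Or.inl rfl)
        (by simp only [e1]; ring) (by simp only [e2, e1]; ring)
    · rw [hpsi, hg]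
      exact pwI_master_deriv h01 h12 h23 hd1 hd2 hd3 (le_of_eq e0.symm) le_rfl
        (Or.inl e0) (Or.inl rfl)
        (by simp only [e1]; ring) (by simp only [e1]; ring)
        (by simp only [e2, e1]; ring) (by simp only [e2, e1]; ring)
    · rw [hpsi, hg]
      exact pwI_master_left h01 h12 h23 hd1 hd2 hd3 hLL (le_of_eq e0.symm) le_rfl (Or.inl e0)
    · rw [hpsi, hg]
      exact pwI_master_right h01 h12 h23 hd1 hd2 hd3 hLL (le_of_eq e0.symm) le_rfl (Or.inl rfl)
    · rw [hpsi, ← e0, pwI_eq_1 h01 h12 h23 ⟨le_rfl, h01.le⟩]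
      simp
    · rw [hpsi, pwI_eq_3 h01 h12 h23 ⟨h23, le_rfl⟩]
    · refine ⟨{nodeX L J 0, nodeX L J 1, nodeX L J 2}, ?_⟩
      intro x hx hxs
      simp only [Finset.mem_insert, Finset.mem_singleton, not_or] at hxs
      obtain ⟨hne0, hne1, hne2⟩ := hxs
      rw [hg]
      have hx0 : nodeX L J 0 < x := by rw [e0]; exact hx.1
      have hφ : phiF L J 1 x =
          (if x ∈ Icc (nodeX L J 0) (nodeX L J 1) then (3:ℝ)/2 else 0)
          + (if x ∈ Ioc (nodeX L J 1) (nodeX L J 2) then -(1:ℝ)/2 else 0) := by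
        simp only [phiF, reduceIte]
      rcases lt_trichotomy x (nodeX L J 1) with hr | hr | hr
      · have hv : -(phiF L J 1 x) = -(3:ℝ)/2 := by
          rw [hφ, if_pos (mem_Icc.mpr ⟨hx0.le, hr.le⟩),
            if_neg (fun hc => absurd hr (not_lt.mpr hc.1.le))]
          norm_num
        rw [hv]
        exact pwI_deriv_r1 h01 h12 h23 hdd1 hdd2 hd3 ⟨hx0, hr⟩
      · exact absurd hr hne1
      rcases lt_trichotomy x (nodeX L J 2) with hr2 | hr2 | hr2
      · have hv : -(phiF L J 1 x) = (1:ℝ)/2 := by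
          rw [hφ, if_neg (fun hc => absurd hc.2 (not_le.mpr hr)),
            if_pos (mem_Ioc.mpr ⟨hr, hr2.le⟩)]
          norm_num
        rw [hv]
        exact pwI_deriv_r2 h01 h12 h23 hdd1 hdd2 hd3 ⟨hr, hr2⟩
      · exact absurd hr2 hne2
      · have hv : -(phiF L J 1 x) = (0:ℝ) := by
          rw [hφ, if_neg (fun hc => absurd hc.2 (not_le.mpr hr)),
            if_neg (fun hc => absurd hc.2 (not_le.mpr hr2))]
          norm_num
        rw [hv]
        exact pwI_deriv_r3 h01 h12 h23 hdd1 hdd2 hd3 ⟨hr2, hx.2⟩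
    · have hφf : phiF L J 1 = fun x =>
          (if x ∈ Icc (nodeX L J 0) (nodeX L J 1) then (3:ℝ)/2 else 0)
          + (if x ∈ Ioc (nodeX L J 1) (nodeX L J 2) then -(1:ℝ)/2 else 0) := by
        funext x; simp only [phiF, reduceIte]
      rw [hφf]
      exact (Measurable.ite measurableSet_Icc measurable_const measurable_const).add
        (Measurable.ite measurableSet_Ioc measurable_const measurable_const)
    · intro x
      simp only [phiF, reduceIte]
      split_ifs <;> rw [abs_le] <;> constructor <;> norm_num
  by_cases hJc : i = J
  · -- ===================== case i = J =====================
    subst hJc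
    have hJne1 : ¬(i = 1) := h1
    have eJ2 : nodeX L i (i-2) = nodeX L i (i-3) + meshH L i := by
      have h' := nodeX_succ (L := L) (J := i) (i-3)
      rwa [show i - 3 + 1 = i - 2 from by omega] at h'
    have eJ1 : nodeX L i (i-1) = nodeX L i (i-2) + meshH L i := by
      have h' := nodeX_succ (L := L) (J := i) (i-2)
      rwa [show i - 2 + 1 = i - 1 from by omega] at h'
    have eJ0 : nodeX L i i = nodeX L i (i-1) + meshH L i := by
      have h' := nodeX_succ (L := L) (J := i) (i-1)
      rwa [show i - 1 + 1 = i from by omega] at h'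
    have eL : nodeX L i i = L := nodeX_last (by omega)
    have h01 : nodeX L i (i-3) < nodeX L i (i-2) := nodeX_lt hL hJ0 (by omega)
    have h12 : nodeX L i (i-2) < nodeX L i (i-1) := nodeX_lt hL hJ0 (by omega)
    have h23 : nodeX L i (i-1) < nodeX L i i := nodeX_lt hL hJ0 (by omega)
    have hn0le : -L ≤ nodeX L i (i-3) := nodeX_ge_left hL hJ0 _
    have hpsi : psiF L i i = pwI (nodeX L i (i-3)) (nodeX L i (i-2)) (nodeX L i (i-1))
        (nodeX L i i)
        (fun _ => (0:ℝ))
        (fun x => (1:ℝ)/4 * (nodeX L i (i-1) - x)^2 - meshH L i / 2 * (nodeX L i (i-1) - x)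
          + (meshH L i)^2/4)
        (fun x => -(3:ℝ)/4 * (nodeX L i i - x)^2 + meshH L i * (nodeX L i i - x)) := by
      funext x
      simp only [psiF, pwI, if_neg hJne1, eq_self_iff_true, if_true, ite_self, zero_add]
    have hg : gF L i i = pwI (nodeX L i (i-3)) (nodeX L i (i-2)) (nodeX L i (i-1))
        (nodeX L i i)
        (fun _ => (0:ℝ))
        (fun x => -(1/2) * (nodeX L i (i-1) - x) + meshH L i / 2)
        (fun x => 3/2 * (nodeX L i i - x) - meshH L i) := by
      simp only [gF, if_neg hJne1, eq_self_iff_true, if_true]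
    have hd1 : ∀ x : ℝ, HasDerivAt (fun _ : ℝ => (0:ℝ)) ((0:ℝ)) x := fun x =>
      hasDerivAt_const x 0
    have hd2 : ∀ x : ℝ, HasDerivAt
        (fun y => (1:ℝ)/4 * (nodeX L i (i-1) - y)^2 - meshH L i / 2 * (nodeX L i (i-1) - y)
          + (meshH L i)^2/4)
        (-(1/2) * (nodeX L i (i-1) - x) + meshH L i / 2) x := fun x =>
      hasDerivAt_of_quad ((1:ℝ)/4) (-(1:ℝ)/2 * nodeX L i (i-1) + meshH L i / 2)
        ((1:ℝ)/4 * (nodeX L i (i-1))^2 - meshH L i / 2 * nodeX L i (i-1) + (meshH L i)^2/4)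
        (fun y => by ring) (by ring)
    have hd3 : ∀ x : ℝ, HasDerivAt
        (fun y => -(3:ℝ)/4 * (nodeX L i i - y)^2 + meshH L i * (nodeX L i i - y))
        (3/2 * (nodeX L i i - x) - meshH L i) x := fun x =>
      hasDerivAt_of_quad (-(3:ℝ)/4) (3/2 * nodeX L i i - meshH L i)
        (-(3:ℝ)/4 * (nodeX L i i)^2 + meshH L i * nodeX L i i)
        (fun y => by ring) (by ring)
    have hdd2 : ∀ x : ℝ, HasDerivAt
        (fun y => -(1/2) * (nodeX L i (i-1) - y) + meshH L i / 2) ((1:ℝ)/2) x := fun x =>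
      hasDerivAt_of_quad 0 ((1:ℝ)/2) (-(1:ℝ)/2 * nodeX L i (i-1) + meshH L i / 2)
        (fun y => by ring) (by ring)
    have hdd3 : ∀ x : ℝ, HasDerivAt
        (fun y => 3/2 * (nodeX L i i - y) - meshH L i) (-(3:ℝ)/2) x := fun x =>
      hasDerivAt_of_quad 0 (-(3:ℝ)/2) (3/2 * nodeX L i i - meshH L i)
        (fun y => by ring) (by ring)
    refine { cont_g := ?_, deriv_psi := ?_, derivW_left := ?_, derivW_right := ?_,
             psi_left := ?_, psi_right := ?_, deriv_g := ?_, meas_phi := ?_, bdd_phi := ?_ }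
    · rw [hg]
      exact pwI_master_cont h01 h12 h23 (by fun_prop) (by fun_prop) (by fun_prop)
        hn0le (le_of_eq eL) (Or.inr rfl) (Or.inl eL)
        (by simp only [eJ1]; ring) (by simp only [eJ0]; ring)
    · rw [hpsi, hg]
      exact pwI_master_deriv h01 h12 h23 hd1 hd2 hd3 hn0le (le_of_eq eL)
        (Or.inr ⟨rfl, rfl⟩) (Or.inl eL)
        (by simp only [eJ1]; ring) (by simp only [eJ1]; ring)
        (by simp only [eJ0]; ring) (by simp only [eJ0]; ring)
    · rw [hpsi, hg]
      exact pwI_master_left h01 h12 h23 hd1 hd2 hd3 hLL hn0le (le_of_eq eL)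
        (Or.inr ⟨rfl, rfl⟩)
    · rw [hpsi, hg]
      exact pwI_master_right h01 h12 h23 hd1 hd2 hd3 hLL hn0le (le_of_eq eL) (Or.inl eL)
    · rcases eq_or_lt_of_le hn0le with he | he
      · rw [hpsi, he, pwI_eq_1 h01 h12 h23 ⟨le_rfl, h01.le⟩]
      · rw [hpsi, pwI_eq_left h01 h12 h23 he]
    · have hlt : nodeX L i (i-1) < L := by have h' := h23; rwa [eL] at h'
      rw [hpsi, pwI_eq_3 h01 h12 h23 ⟨hlt, le_of_eq eL.symm⟩]
      simp [eL]
    · refine ⟨{nodeX L i (i-3), nodeX L i (i-2), nodeX L i (i-1)}, ?_⟩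
      intro x hx hxs
      simp only [Finset.mem_insert, Finset.mem_singleton, not_or] at hxs
      obtain ⟨hne0, hne1, hne2⟩ := hxs
      rw [hg]
      have hxL : x < nodeX L i i := by rw [eL]; exact hx.2
      have hφ : phiF L i i x =
          (if x ∈ Ioc (nodeX L i (i-2)) (nodeX L i (i-1)) then -(1:ℝ)/2 else 0)
          + (if x ∈ Ioc (nodeX L i (i-1)) (nodeX L i i) then (3:ℝ)/2 else 0) := by
        simp only [phiF, if_neg hJne1, eq_self_iff_true, if_true]
      rcases lt_trichotomy x (nodeX L i (i-3)) with hr0 | hr0 | hr0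
      · have hv : -(phiF L i i x) = (0:ℝ) := by
          rw [hφ, if_neg (fun hc => absurd (h01.trans hc.1) (not_lt.mpr hr0.le)),
            if_neg (fun hc => absurd ((h01.trans h12).trans hc.1) (not_lt.mpr hr0.le))]
          norm_num
        rw [hv]
        exact pwI_deriv_left h01 h12 h23 hd1 hdd2 hdd3 hr0
      · exact absurd hr0 hne0
      rcases lt_trichotomy x (nodeX L i (i-2)) with hr | hr | hr
      · have hv : -(phiF L i i x) = (0:ℝ) := by
          rw [hφ, if_neg (fun hc => absurd hc.1 (not_lt.mpr hr.le)),
            if_neg (fun hc => absurd (h12.trans hc.1) (not_lt.mpr hr.le))]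
          norm_num
        rw [hv]
        exact pwI_deriv_r1 h01 h12 h23 hd1 hdd2 hdd3 ⟨hr0, hr⟩
      · exact absurd hr hne1
      rcases lt_trichotomy x (nodeX L i (i-1)) with hr2 | hr2 | hr2
      · have hv : -(phiF L i i x) = (1:ℝ)/2 := by
          rw [hφ, if_pos (mem_Ioc.mpr ⟨hr, hr2.le⟩),
            if_neg (fun hc => absurd hc.1 (not_lt.mpr hr2.le))]
          norm_num
        rw [hv]
        exact pwI_deriv_r2 h01 h12 h23 hd1 hdd2 hdd3 ⟨hr, hr2⟩
      · exact absurd hr2 hne2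
      · have hv : -(phiF L i i x) = -(3:ℝ)/2 := by
          rw [hφ, if_neg (fun hc => absurd hc.2 (not_le.mpr hr2)),
            if_pos (mem_Ioc.mpr ⟨hr2, hxL.le⟩)]
          norm_num
        rw [hv]
        exact pwI_deriv_r3 h01 h12 h23 hd1 hdd2 hdd3 ⟨hr2, hxL⟩
    · have hφf : phiF L i i = fun x =>
          (if x ∈ Ioc (nodeX L i (i-2)) (nodeX L i (i-1)) then -(1:ℝ)/2 else 0)
          + (if x ∈ Ioc (nodeX L i (i-1)) (nodeX L i i) then (3:ℝ)/2 else 0) := by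
        funext x; simp only [phiF, if_neg hJne1, eq_self_iff_true, if_true]
      rw [hφf]
      exact (Measurable.ite measurableSet_Ioc measurable_const measurable_const).add
        (Measurable.ite measurableSet_Ioc measurable_const measurable_const)
    · intro x
      simp only [phiF, if_neg hJne1, eq_self_iff_true, if_true]
      split_ifs <;> rw [abs_le] <;> constructor <;> norm_num
  · -- ===================== middle case =====================
    have hi2 : 2 ≤ i := by omega
    have em1 : nodeX L J (i-1) = nodeX L J (i-2) + meshH L J := by
      have h' := nodeX_succ (L := L) (J := J) (i-2)
      rwa [show i - 2 + 1 = i - 1 from by omega] at h'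
    have em2 : nodeX L J i = nodeX L J (i-1) + meshH L J := by
      have h' := nodeX_succ (L := L) (J := J) (i-1)
      rwa [show i - 1 + 1 = i from by omega] at h'
    have em3 : nodeX L J (i+1) = nodeX L J i + meshH L J := nodeX_succ i
    have h01 : nodeX L J (i-2) < nodeX L J (i-1) := nodeX_lt hL hJ0 (by omega)
    have h12 : nodeX L J (i-1) < nodeX L J i := nodeX_lt hL hJ0 (by omega)
    have h23 : nodeX L J i < nodeX L J (i+1) := nodeX_lt hL hJ0 (by omega)
    have hn0le : -L ≤ nodeX L J (i-2) := nodeX_ge_left hL hJ0 _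
    have hn3le : nodeX L J (i+1) ≤ L := nodeX_le_right hL hJ0 (by omega)
    have hpsi : psiF L J i = pwI (nodeX L J (i-2)) (nodeX L J (i-1)) (nodeX L J i)
        (nodeX L J (i+1))
        (fun x => (1:ℝ)/4 * (x - nodeX L J (i-2))^2)
        (fun x => -(1:ℝ)/2 * (x - nodeX L J (i-1) - meshH L J / 2)^2
          + 3 * (meshH L J)^2 / 8)
        (fun x => (1:ℝ)/4 * (nodeX L J (i+1) - x)^2) := by
      funext x
      simp only [psiF, pwI, if_neg h1, if_neg hJc]
      by_cases hxa : x = nodeX L J (i-2)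
      · subst hxa
        rw [if_neg (fun hc => lt_irrefl _ hc.1), if_pos (mem_Icc.mpr ⟨le_rfl, h01.le⟩)]
        have hP : (1:ℝ)/4 * (nodeX L J (i-2) - nodeX L J (i-2))^2 = 0 := by ring
        rw [hP]
      · simp only [mem_Icc_eq_mem_Ioc hxa]
    have hg : gF L J i = pwI (nodeX L J (i-2)) (nodeX L J (i-1)) (nodeX L J i)
        (nodeX L J (i+1))
        (fun x => 1/2 * (x - nodeX L J (i-2)))
        (fun x => -(x - nodeX L J (i-1)) + meshH L J / 2)
        (fun x => -(1/2) * (nodeX L J (i+1) - x)) := by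
      simp only [gF, if_neg h1, if_neg hJc]
    have hd1 : ∀ x : ℝ, HasDerivAt (fun y => (1:ℝ)/4 * (y - nodeX L J (i-2))^2)
        (1/2 * (x - nodeX L J (i-2))) x := fun x =>
      hasDerivAt_of_quad ((1:ℝ)/4) (-(1:ℝ)/2 * nodeX L J (i-2))
        ((1:ℝ)/4 * (nodeX L J (i-2))^2) (fun y => by ring) (by ring)
    have hd2 : ∀ x : ℝ, HasDerivAt
        (fun y => -(1:ℝ)/2 * (y - nodeX L J (i-1) - meshH L J / 2)^2
          + 3 * (meshH L J)^2 / 8)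
        (-(x - nodeX L J (i-1)) + meshH L J / 2) x := fun x =>
      hasDerivAt_of_quad (-(1:ℝ)/2) (nodeX L J (i-1) + meshH L J / 2)
        (-(1:ℝ)/2 * (nodeX L J (i-1) + meshH L J / 2)^2 + 3 * (meshH L J)^2 / 8)
        (fun y => by ring) (by ring)
    have hd3 : ∀ x : ℝ, HasDerivAt (fun y => (1:ℝ)/4 * (nodeX L J (i+1) - y)^2)
        (-(1/2) * (nodeX L J (i+1) - x)) x := fun x =>
      hasDerivAt_of_quad ((1:ℝ)/4) (-(1:ℝ)/2 * nodeX L J (i+1))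
        ((1:ℝ)/4 * (nodeX L J (i+1))^2) (fun y => by ring) (by ring)
    have hdd1 : ∀ x : ℝ, HasDerivAt (fun y => 1/2 * (y - nodeX L J (i-2)))
        ((1:ℝ)/2) x := fun x =>
      hasDerivAt_of_quad 0 ((1:ℝ)/2) (-(1:ℝ)/2 * nodeX L J (i-2))
        (fun y => by ring) (by ring)
    have hdd2 : ∀ x : ℝ, HasDerivAt (fun y => -(y - nodeX L J (i-1)) + meshH L J / 2)
        (-(1:ℝ)) x := fun x =>
      hasDerivAt_of_quad 0 (-(1:ℝ)) (nodeX L J (i-1) + meshH L J / 2)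
        (fun y => by ring) (by ring)
    have hdd3 : ∀ x : ℝ, HasDerivAt (fun y => -(1/2) * (nodeX L J (i+1) - y))
        ((1:ℝ)/2) x := fun x =>
      hasDerivAt_of_quad 0 ((1:ℝ)/2) (-(1:ℝ)/2 * nodeX L J (i+1))
        (fun y => by ring) (by ring)
    refine { cont_g := ?_, deriv_psi := ?_, derivW_left := ?_, derivW_right := ?_,
             psi_left := ?_, psi_right := ?_, deriv_g := ?_, meas_phi := ?_, bdd_phi := ?_ }
    · rw [hg]
      exact pwI_master_cont h01 h12 h23 (by fun_prop) (by fun_prop) (by fun_prop)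
        hn0le hn3le (Or.inr (by simp)) (Or.inr (by simp))
        (by simp only [em1]; ring) (by simp only [em3, em2]; ring)
    · rw [hpsi, hg]
      exact pwI_master_deriv h01 h12 h23 hd1 hd2 hd3 hn0le hn3le
        (Or.inr ⟨by simp, by simp⟩) (Or.inr ⟨by simp, by simp⟩)
        (by simp only [em1]; ring) (by simp only [em1]; ring)
        (by simp only [em3, em2]; ring) (by simp only [em3, em2]; ring)
    · rw [hpsi, hg]
      exact pwI_master_left h01 h12 h23 hd1 hd2 hd3 hLL hn0le hn3le
        (Or.inr ⟨by simp, by simp⟩)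
    · rw [hpsi, hg]
      exact pwI_master_right h01 h12 h23 hd1 hd2 hd3 hLL hn0le hn3le
        (Or.inr ⟨by simp, by simp⟩)
    · rcases eq_or_lt_of_le hn0le with he | he
      · rw [hpsi, he, pwI_eq_1 h01 h12 h23 ⟨le_rfl, h01.le⟩]
        simp
      · rw [hpsi, pwI_eq_left h01 h12 h23 he]
    · rcases eq_or_lt_of_le hn3le with he | he
      · have hlt : nodeX L J i < L := by have h' := h23; rwa [he] at h'
        rw [hpsi, pwI_eq_3 h01 h12 h23 ⟨hlt, le_of_eq he.symm⟩]
        simp [he]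
      · rw [hpsi, pwI_eq_right h01 h12 h23 he]
    · refine ⟨{nodeX L J (i-2), nodeX L J (i-1), nodeX L J i, nodeX L J (i+1)}, ?_⟩
      intro x hx hxs
      simp only [Finset.mem_insert, Finset.mem_singleton, not_or] at hxs
      obtain ⟨hne0, hne1, hne2, hne3⟩ := hxs
      rw [hg]
      have hφ : phiF L J i x =
          (if x ∈ Ioc (nodeX L J (i-2)) (nodeX L J (i-1)) then -(1:ℝ)/2 else 0)
          + (if x ∈ Ioc (nodeX L J (i-1)) (nodeX L J i) then (1:ℝ) else 0)
          + (if x ∈ Ioc (nodeX L J i) (nodeX L J (i+1)) then -(1:ℝ)/2 else 0) := by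
        simp only [phiF, if_neg h1, if_neg hJc]
      rcases lt_trichotomy x (nodeX L J (i-2)) with hr0 | hr0 | hr0
      · have hv : -(phiF L J i x) = (0:ℝ) := by
          rw [hφ, if_neg (fun hc => absurd hc.1 (not_lt.mpr hr0.le)),
            if_neg (fun hc => absurd (h01.trans hc.1) (not_lt.mpr hr0.le)),
            if_neg (fun hc => absurd ((h01.trans h12).trans hc.1) (not_lt.mpr hr0.le))]
          norm_num
        rw [hv]
        exact pwI_deriv_left h01 h12 h23 hdd1 hdd2 hdd3 hr0
      · exact absurd hr0 hne0
      rcases lt_trichotomy x (nodeX L J (i-1)) with hr | hr | hr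
      · have hv : -(phiF L J i x) = (1:ℝ)/2 := by
          rw [hφ, if_pos (mem_Ioc.mpr ⟨hr0, hr.le⟩),
            if_neg (fun hc => absurd hc.1 (not_lt.mpr hr.le)),
            if_neg (fun hc => absurd (h12.trans hc.1) (not_lt.mpr hr.le))]
          norm_num
        rw [hv]
        exact pwI_deriv_r1 h01 h12 h23 hdd1 hdd2 hdd3 ⟨hr0, hr⟩
      · exact absurd hr hne1
      rcases lt_trichotomy x (nodeX L J i) with hr2 | hr2 | hr2
      · have hv : -(phiF L J i x) = -(1:ℝ) := by
          rw [hφ, if_neg (fun hc => absurd hc.2 (not_le.mpr hr)),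
            if_pos (mem_Ioc.mpr ⟨hr, hr2.le⟩),
            if_neg (fun hc => absurd hc.1 (not_lt.mpr hr2.le))]
          norm_num
        rw [hv]
        exact pwI_deriv_r2 h01 h12 h23 hdd1 hdd2 hdd3 ⟨hr, hr2⟩
      · exact absurd hr2 hne2
      rcases lt_trichotomy x (nodeX L J (i+1)) with hr3 | hr3 | hr3
      · have hv : -(phiF L J i x) = (1:ℝ)/2 := by
          rw [hφ, if_neg (fun hc => absurd hc.2 (not_le.mpr (h12.trans hr2))),
            if_neg (fun hc => absurd hc.2 (not_le.mpr hr2)),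
            if_pos (mem_Ioc.mpr ⟨hr2, hr3.le⟩)]
          norm_num
        rw [hv]
        exact pwI_deriv_r3 h01 h12 h23 hdd1 hdd2 hdd3 ⟨hr2, hr3⟩
      · exact absurd hr3 hne3
      · have hv : -(phiF L J i x) = (0:ℝ) := by
          rw [hφ, if_neg (fun hc => absurd hc.2 (not_le.mpr ((h12.trans (h23.trans hr3))))),
            if_neg (fun hc => absurd hc.2 (not_le.mpr (h23.trans hr3))),
            if_neg (fun hc => absurd hc.2 (not_le.mpr hr3))]
          norm_num
        rw [hv]
        exact pwI_deriv_right h01 h12 h23 hdd1 hdd2 hdd3 hr3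
    · have hφf : phiF L J i = fun x =>
          (if x ∈ Ioc (nodeX L J (i-2)) (nodeX L J (i-1)) then -(1:ℝ)/2 else 0)
          + (if x ∈ Ioc (nodeX L J (i-1)) (nodeX L J i) then (1:ℝ) else 0)
          + (if x ∈ Ioc (nodeX L J i) (nodeX L J (i+1)) then -(1:ℝ)/2 else 0) := by
        funext x; simp only [phiF, if_neg h1, if_neg hJc]
      rw [hφf]
      exact ((Measurable.ite measurableSet_Ioc measurable_const measurable_const).add
        (Measurable.ite measurableSet_Ioc measurable_const measurable_const)).add
        (Measurable.ite measurableSet_Ioc measurable_const measurable_const)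
    · intro x
      simp only [phiF, if_neg h1, if_neg hJc]
      split_ifs <;> rw [abs_le] <;> constructor <;> norm_num

end Instantiation

/-- The two-dimensional basis function `Ψ_𝐢(x) = (3/(2h²)) ψ_{i_1}(x_1) ψ_{i_2}(x_2)`
is `C¹` on the closed square `[−L,L]²`, vanishes on the boundary of `(−L,L)²`, and is
the weak solution of the homogeneous Dirichlet Poisson problem `−ΔΨ_𝐢 = Φ_𝐢` with
`Φ_𝐢(x) = (3/(2h²))[φ_{i_1}(x_1)ψ_{i_2}(x_2) + ψ_{i_1}(x_1)φ_{i_2}(x_2)]`. -/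
theorem stmt19 (L : ℝ) (hL : 0 < L) (J : ℕ) (hJ : 3 ≤ J)
    (i1 i2 : ℕ) (hi1 : 1 ≤ i1) (hi1' : i1 ≤ J) (hi2 : 1 ≤ i2) (hi2' : i2 ≤ J) :
    ContDiffOn ℝ 1
      (fun x : ℝ × ℝ => 3 / (2 * (meshH L J) ^ 2) * (psiF L J i1 x.1 * psiF L J i2 x.2))
      (Icc (-L) L ×ˢ Icc (-L) L) ∧
    (∀ x ∈ frontier (Ioo (-L) L ×ˢ Ioo (-L) L),
      3 / (2 * (meshH L J) ^ 2) * (psiF L J i1 x.1 * psiF L J i2 x.2) = 0) ∧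
    ∀ w : ℝ × ℝ → ℝ, ContDiff ℝ (⊤ : ℕ∞) w → HasCompactSupport w →
      tsupport w ⊆ Ioo (-L) L ×ˢ Ioo (-L) L →
      ∫ x in Ioo (-L) L ×ˢ Ioo (-L) L,
          (fderiv ℝ (fun y : ℝ × ℝ =>
              3 / (2 * (meshH L J) ^ 2) * (psiF L J i1 y.1 * psiF L J i2 y.2)) x ((1 : ℝ), (0 : ℝ))
            * fderiv ℝ w x ((1 : ℝ), (0 : ℝ))
          + fderiv ℝ (fun y : ℝ × ℝ =>
              3 / (2 * (meshH L J) ^ 2) * (psiF L J i1 y.1 * psiF L J i2 y.2)) x ((0 : ℝ), (1 : ℝ))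
            * fderiv ℝ w x ((0 : ℝ), (1 : ℝ)))
        = ∫ x in Ioo (-L) L ×ˢ Ioo (-L) L,
            (3 / (2 * (meshH L J) ^ 2) *
              (phiF L J i1 x.1 * psiF L J i2 x.2 + psiF L J i1 x.1 * phiF L J i2 x.2)) * w x :=
  main2D hL (3 / (2 * (meshH L J) ^ 2))
    (oneD_main L hL J hJ i1 hi1 hi1') (oneD_main L hL J hJ i2 hi2 hi2')

end
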